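/- Fix a real number R and a real ρ ≤ 1. Then min over pairs (T,V) with D(T∘V‖T×Q) ≥ R of { D(T∘V‖Q∘P) + D(T∘V‖T×Q) − R } is at least min over all pairs (T,V) of { D(T∘V‖Q∘P) + ρ·( D(T∘V‖T×Q) − R ) }. In the case of equality, every minimizer of the left-hand side also minimizes the right-hand side and satisfies D(T∘V‖T×Q) = R when ρ < 1 (respectively D(T∘V‖T×Q) ≥ R when ρ = 1). Conversely, if the right-hand minimum is attained by some pair (T_ρ,V_ρ) with D(T_ρ∘V_ρ‖T_ρ×Q) = R (respectively D(T_ρ∘V_ρ‖T_ρ×Q) ≥ R when ρ = 1), then (T_ρ,V_ρ) also attains the left-hand minimum and equality holds. -/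

import Mathlib

open scoped BigOperators
open Filter Topology

/-- `f` is a probability mass function on a finite alphabet. -/
def IsPMF {α : Type*} [Fintype α] (f : α → ℝ) : Prop :=
  (∀ a, 0 ≤ f a) ∧ ∑ a, f a = 1

/-- `P` is a discrete memoryless channel from `𝓧` to `𝓨`. -/
def IsChannel {𝓧 𝓨 : Type*} [Fintype 𝓧] [Fintype 𝓨] (P : 𝓧 → 𝓨 → ℝ) : Prop :=
  ∀ x, IsPMF (P x)

/-- `V` is a conditional pmf on `𝓧` given `𝓨`. -/
def IsCondPMF {𝓧 𝓨 : Type*} [Fintype 𝓧] [Fintype 𝓨] (V : 𝓨 → 𝓧 → ℝ) : Prop :=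
  ∀ y, IsPMF (V y)

/-- one term `s·log(s/t)` of a KL divergence, with the conventions
    `0·log(0/t) = 0` and `s·log(s/0) = +∞` for `s > 0`. -/
noncomputable def klTerm (s t : ℝ) : EReal :=
  if s = 0 then 0 else if t = 0 then ⊤ else ((s * Real.log (s / t) : ℝ) : EReal)

/-- `D(T∘V ‖ Q∘P)`. -/
noncomputable def DQP {𝓧 𝓨 : Type*} [Fintype 𝓧] [Fintype 𝓨]
    (T : 𝓨 → ℝ) (V : 𝓨 → 𝓧 → ℝ) (Q : 𝓧 → ℝ) (P : 𝓧 → 𝓨 → ℝ) : EReal :=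
  ∑ y, ∑ x, klTerm (T y * V y x) (Q x * P x y)

/-- `D(T∘V ‖ T×Q)`. -/
noncomputable def DTQ {𝓧 𝓨 : Type*} [Fintype 𝓧] [Fintype 𝓨]
    (T : 𝓨 → ℝ) (V : 𝓨 → 𝓧 → ℝ) (Q : 𝓧 → ℝ) : EReal :=
  ∑ y, ∑ x, klTerm (T y * V y x) (T y * Q x)

/-- Gallager's function `E₀(ρ,Q)` (for `ρ > −1`). -/
noncomputable def E0 {𝓧 𝓨 : Type*} [Fintype 𝓧] [Fintype 𝓨]
    (ρ : ℝ) (Q : 𝓧 → ℝ) (P : 𝓧 → 𝓨 → ℝ) : ℝ :=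
  - Real.log (∑ y, (∑ x, Q x * P x y ^ (1 / (1 + ρ))) ^ (1 + ρ))

/-- The joint distribution `T_ρ∘V_ρ` on `𝓧 × 𝓨` (for `ρ > −1`). -/
noncomputable def Jrho {𝓧 𝓨 : Type*} [Fintype 𝓧] [Fintype 𝓨]
    (ρ : ℝ) (Q : 𝓧 → ℝ) (P : 𝓧 → 𝓨 → ℝ) (x : 𝓧) (y : 𝓨) : ℝ :=
  Q x * P x y ^ (1 / (1 + ρ)) * (∑ a, Q a * P a y ^ (1 / (1 + ρ))) ^ ρ /
    ∑ y', (∑ a, Q a * P a y' ^ (1 / (1 + ρ))) ^ (1 + ρ)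

/-- `max_{x : Q(x) > 0} P(y|x)`. -/
noncomputable def maxP {𝓧 𝓨 : Type*} (Q : 𝓧 → ℝ) (P : 𝓧 → 𝓨 → ℝ) (y : 𝓨) : ℝ :=
  ⨆ x : {x // 0 < Q x}, P x.1 y

/-- `E₀(−1,Q) = −log ∑_y max_{x : Q(x)>0} P(y|x)`. -/
noncomputable def E0m1 {𝓧 𝓨 : Type*} [Fintype 𝓧] [Fintype 𝓨]
    (Q : 𝓧 → ℝ) (P : 𝓧 → 𝓨 → ℝ) : ℝ :=
  - Real.log (∑ y, maxP Q P y)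

/-- `E₀(ρ,Q)` extended to `ρ = −1`. -/
noncomputable def E0full {𝓧 𝓨 : Type*} [Fintype 𝓧] [Fintype 𝓨]
    (ρ : ℝ) (Q : 𝓧 → ℝ) (P : 𝓧 → 𝓨 → ℝ) : ℝ :=
  if ρ = -1 then E0m1 Q P else E0 ρ Q P

/-- `T_{−1}(y) ∝ max_{a : Q(a)>0} P(y|a)`. -/
noncomputable def Tm1 {𝓧 𝓨 : Type*} [Fintype 𝓧] [Fintype 𝓨]
    (Q : 𝓧 → ℝ) (P : 𝓧 → 𝓨 → ℝ) (y : 𝓨) : ℝ :=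
  maxP Q P y / ∑ y', maxP Q P y'

/-- `V` is admissible at `ρ = −1`: `V(x|y) = 0` for every `x` outside
    `argmax_{a : Q(a)>0} P(y|a)`. -/
def AdmissibleAtM1 {𝓧 𝓨 : Type*} [Fintype 𝓧] [Fintype 𝓨]
    (Q : 𝓧 → ℝ) (P : 𝓧 → 𝓨 → ℝ) (V : 𝓨 → 𝓧 → ℝ) : Prop :=
  ∀ y x, ¬ (0 < Q x ∧ ∀ a, 0 < Q a → P a y ≤ P x y) → V y x = 0

/-- the error exponent `E_e(R,Q)`. -/
noncomputable def Ee {𝓧 𝓨 : Type*} [Fintype 𝓧] [Fintype 𝓨]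
    (R : ℝ) (Q : 𝓧 → ℝ) (P : 𝓧 → 𝓨 → ℝ) : EReal :=
  sInf {v | ∃ T : 𝓨 → ℝ, ∃ V : 𝓨 → 𝓧 → ℝ, IsPMF T ∧ IsCondPMF V ∧
    v = DQP T V Q P + max (DTQ T V Q - (R : EReal)) 0}

/-- the ML correct-decoding exponent `E_c^{ML}(R,Q)`. -/
noncomputable def EcML {𝓧 𝓨 : Type*} [Fintype 𝓧] [Fintype 𝓨]
    (R : ℝ) (Q : 𝓧 → ℝ) (P : 𝓧 → 𝓨 → ℝ) : EReal :=
  sInf {v | ∃ T : 𝓨 → ℝ, ∃ V : 𝓨 → 𝓧 → ℝ, IsPMF T ∧ IsCondPMF V ∧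
    v = DQP T V Q P + max ((R : EReal) - DTQ T V Q) 0}

/-- the strict correct-decoding exponent `E_c(R,Q)` (`+∞` if infeasible). -/
noncomputable def Ec {𝓧 𝓨 : Type*} [Fintype 𝓧] [Fintype 𝓨]
    (R : ℝ) (Q : 𝓧 → ℝ) (P : 𝓧 → 𝓨 → ℝ) : EReal :=
  sInf {v | ∃ T : 𝓨 → ℝ, ∃ V : 𝓨 → 𝓧 → ℝ, IsPMF T ∧ IsCondPMF V ∧
    (R : EReal) ≤ DTQ T V Q ∧ v = DQP T V Q P}

/-- the mutual information `I(Q∘P)`. -/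
noncomputable def MI {𝓧 𝓨 : Type*} [Fintype 𝓧] [Fintype 𝓨]
    (Q : 𝓧 → ℝ) (P : 𝓧 → 𝓨 → ℝ) : ℝ :=
  ∑ x, ∑ y, if Q x * P x y = 0 then 0
    else Q x * P x y * Real.log (P x y / ∑ a, Q a * P a y)

/-- the capacity `C(Z)` of the channel restricted to input letters in `Z`. -/
noncomputable def capacity {𝓧 𝓨 : Type*} [Fintype 𝓧] [Fintype 𝓨]
    (P : 𝓧 → 𝓨 → ℝ) (Z : Set 𝓧) : ℝ :=
  sSup {c | ∃ Q' : 𝓧 → ℝ, IsPMF Q' ∧ (∀ x, 0 < Q' x → x ∈ Z) ∧ c = MI Q' P}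

/-- `R_{−1}^{−}(Q)`. -/
noncomputable def Rm1minus {𝓧 𝓨 : Type*} [Fintype 𝓧] [Fintype 𝓨]
    (Q : 𝓧 → ℝ) (P : 𝓧 → 𝓨 → ℝ) : EReal :=
  sInf {v | ∃ V : 𝓨 → 𝓧 → ℝ, IsCondPMF V ∧ AdmissibleAtM1 Q P V ∧
    v = DTQ (Tm1 Q P) V Q}

/-- `R_{−1}^{+}(Q)`. -/
noncomputable def Rm1plus {𝓧 𝓨 : Type*} [Fintype 𝓧] [Fintype 𝓨]
    (Q : 𝓧 → ℝ) (P : 𝓧 → 𝓨 → ℝ) : EReal :=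
  sSup {v | ∃ V : 𝓨 → 𝓧 → ℝ, IsCondPMF V ∧ AdmissibleAtM1 Q P V ∧
    v = DTQ (Tm1 Q P) V Q}

/-- `F_ρ(T∘V, Q) = D(T∘V‖Q∘P) + ρ·D(T∘V‖T×Q)`. -/
noncomputable def Frho {𝓧 𝓨 : Type*} [Fintype 𝓧] [Fintype 𝓨]
    (ρ : ℝ) (T : 𝓨 → ℝ) (V : 𝓨 → 𝓧 → ℝ) (Q : 𝓧 → ℝ) (P : 𝓧 → 𝓨 → ℝ) : EReal :=
  DQP T V Q P + (ρ : EReal) * DTQ T V Q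

/-- the unconstrained penalized minimum
    `min_{T,V} { D(T∘V‖Q∘P) + ρ·(D(T∘V‖T×Q) − R) }`. -/
noncomputable def penMin {𝓧 𝓨 : Type*} [Fintype 𝓧] [Fintype 𝓨]
    (Q : 𝓧 → ℝ) (P : 𝓧 → 𝓨 → ℝ) (R ρ : ℝ) : EReal :=
  sInf {v | ∃ T : 𝓨 → ℝ, ∃ V : 𝓨 → 𝓧 → ℝ, IsPMF T ∧ IsCondPMF V ∧
    v = DQP T V Q P + (ρ : EReal) * (DTQ T V Q - (R : EReal))}

/-- the support-constrained penalized minimum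
    `min_{T,V : supp(V) ⊆ supp(Q)} { D(T∘V‖Q∘P) − ρ·(R − D(T∘V‖T×Q)) }`. -/
noncomputable def penMinS {𝓧 𝓨 : Type*} [Fintype 𝓧] [Fintype 𝓨]
    (Q : 𝓧 → ℝ) (P : 𝓧 → 𝓨 → ℝ) (R ρ : ℝ) : EReal :=
  sInf {v | ∃ T : 𝓨 → ℝ, ∃ V : 𝓨 → 𝓧 → ℝ, IsPMF T ∧ IsCondPMF V ∧
    (∀ y x, Q x = 0 → V y x = 0) ∧
    v = DQP T V Q P - (ρ : EReal) * ((R : EReal) - DTQ T V Q)}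

/-- the constrained minimum
    `min_{T,V : D(T∘V‖T×Q) ≥ R} { D(T∘V‖Q∘P) + D(T∘V‖T×Q) − R }`. -/
noncomputable def cMinGe {𝓧 𝓨 : Type*} [Fintype 𝓧] [Fintype 𝓨]
    (Q : 𝓧 → ℝ) (P : 𝓧 → 𝓨 → ℝ) (R : ℝ) : EReal :=
  sInf {v | ∃ T : 𝓨 → ℝ, ∃ V : 𝓨 → 𝓧 → ℝ, IsPMF T ∧ IsCondPMF V ∧
    (R : EReal) ≤ DTQ T V Q ∧ v = DQP T V Q P + DTQ T V Q - (R : EReal)}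

/-!
A pair feasible for the constrained problem has `D(T∘V‖T×Q) − R ≥ 0`, so for `ρ ≤ 1` its penalized
objective is at most its constrained one. This gives the inequality and, at equality, forces every
constrained minimizer to be a penalized minimizer. The penalized minimum is finite, so for `ρ < 1`
equality of the two (then real) objectives means `(1 − ρ)(D(T∘V‖T×Q) − R) = 0`. Conversely, when
`D(T∘V‖T×Q) = R` or `ρ = 1` the two objectives agree at a penalized minimizer, which is feasible and
so squeezes the constrained minimum down to the penalized one.
-/

namespace EReal

lemma sum_ne_bot {ι : Type*} {s : Finset ι} {f : ι → EReal} (h : ∀ i ∈ s, f i ≠ ⊥) :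
    ∑ i ∈ s, f i ≠ ⊥ :=
  Finset.sum_induction f (· ≠ ⊥) (fun _ _ ha hb => add_ne_bot_iff.2 ⟨ha, hb⟩) zero_ne_bot h

lemma sum_ne_top {ι : Type*} {s : Finset ι} {f : ι → EReal} (h : ∀ i ∈ s, f i ≠ ⊤) :
    ∑ i ∈ s, f i ≠ ⊤ :=
  Finset.sum_induction f (· ≠ ⊤) (fun _ _ ha hb => (add_lt_top ha hb).ne) zero_ne_top h

lemma add_sub_coe_assoc (a d : EReal) (r : ℝ) : a + d - r = a + (d - r) := by
  rw [sub_eq_add_neg, sub_eq_add_neg, add_assoc]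

lemma coe_mul_le_self {ρ : ℝ} (hρ : ρ ≤ 1) {x : EReal} (hx : 0 ≤ x) : (ρ : EReal) * x ≤ x := by
  rcases eq_or_ne x ⊤ with rfl | hx_top
  · exact le_top
  lift x to ℝ using ⟨hx_top, ne_bot_of_le_ne_bot zero_ne_bot hx⟩
  exact_mod_cast mul_le_of_le_one_left (by exact_mod_cast hx) hρ

lemma add_coe_mul_sub_le_add_sub (a : EReal) {d : EReal} {r ρ : ℝ} (hρ : ρ ≤ 1) (hr : r ≤ d) :
    a + ρ * (d - r) ≤ a + d - r := by
  rw [add_sub_coe_assoc]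
  gcongr
  exact coe_mul_le_self hρ ((sub_nonneg (.inr (coe_ne_top r)) (.inr (coe_ne_bot r))).2 hr)

lemma eq_of_add_coe_mul_sub_eq_add_sub {a d : EReal} {r ρ : ℝ} (ha : a ≠ ⊥) (hd : d ≠ ⊥)
    (hρ : ρ < 1) (hfin : a + d - r ≠ ⊤) (h : a + ρ * (d - r) = a + d - r) : d = r := by
  have hd_top : d ≠ ⊤ := by
    rintro rfl
    exact hfin (by rw [add_top_of_ne_bot ha, top_sub_coe])
  have ha_top : a ≠ ⊤ := by
    rintro rfl
    exact hfin (by rw [top_add_of_ne_bot hd, top_sub_coe])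
  lift a to ℝ using ⟨ha_top, ha⟩
  lift d to ℝ using ⟨hd_top, hd⟩
  norm_cast at h ⊢
  have : (1 - ρ) * (d - r) = 0 := by linarith
  rcases mul_eq_zero.1 this with h | h <;> linarith

lemma add_coe_mul_sub_eq_add_sub (a : EReal) {d : EReal} {r ρ : ℝ} (h : d = r ∨ ρ = 1) :
    a + ρ * (d - r) = a + d - r := by
  rcases h with rfl | rfl
  · simp [add_sub_cancel_right]
  · rw [coe_one, one_mul, add_sub_coe_assoc]

end EReal

lemma klTerm_ne_bot (s t : ℝ) : klTerm s t ≠ ⊥ := by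
  unfold klTerm
  split_ifs
  · exact EReal.zero_ne_bot
  · exact top_ne_bot
  · exact EReal.coe_ne_bot _

lemma klTerm_ne_top {s t : ℝ} (h : s ≠ 0 → t ≠ 0) : klTerm s t ≠ ⊤ := by
  unfold klTerm
  split_ifs with hs ht
  · simp
  · exact absurd ht (h hs)
  · exact EReal.coe_ne_top _

lemma IsPMF.exists_ne_zero {α : Type*} [Fintype α] {f : α → ℝ} (hf : IsPMF f) : ∃ a, f a ≠ 0 := by
  obtain ⟨a, -, ha⟩ := Finset.exists_ne_zero_of_sum_ne_zero (hf.2 ▸ one_ne_zero : ∑ a, f a ≠ 0)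
  exact ⟨a, ha⟩

lemma isPMF_pi_single {α : Type*} [Fintype α] [DecidableEq α] (a : α) :
    IsPMF (Pi.single a (1 : ℝ)) :=
  ⟨fun b => by by_cases h : b = a <;> simp [h], Fintype.sum_pi_single' a 1⟩

section Divergences

variable {𝓧 𝓨 : Type*} [Fintype 𝓧] [Fintype 𝓨]
  (T : 𝓨 → ℝ) (V : 𝓨 → 𝓧 → ℝ) (Q : 𝓧 → ℝ) (P : 𝓧 → 𝓨 → ℝ)

lemma DQP_ne_bot : DQP T V Q P ≠ ⊥ :=
  EReal.sum_ne_bot fun _ _ => EReal.sum_ne_bot fun _ _ => klTerm_ne_bot _ _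

lemma DTQ_ne_bot : DTQ T V Q ≠ ⊥ :=
  EReal.sum_ne_bot fun _ _ => EReal.sum_ne_bot fun _ _ => klTerm_ne_bot _ _

variable {T V Q P}

lemma DQP_ne_top (h : ∀ y x, T y * V y x ≠ 0 → Q x * P x y ≠ 0) : DQP T V Q P ≠ ⊤ :=
  EReal.sum_ne_top fun y _ => EReal.sum_ne_top fun x _ => klTerm_ne_top (h y x)

lemma DTQ_ne_top (h : ∀ y x, V y x ≠ 0 → Q x ≠ 0) : DTQ T V Q ≠ ⊤ :=
  EReal.sum_ne_top fun y _ => EReal.sum_ne_top fun x _ => klTerm_ne_top fun hTV =>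
    mul_ne_zero (left_ne_zero_of_mul hTV) (h y x (right_ne_zero_of_mul hTV))

lemma penMin_le (hT : IsPMF T) (hV : IsCondPMF V) (R ρ : ℝ) :
    penMin Q P R ρ ≤ DQP T V Q P + ρ * (DTQ T V Q - R) :=
  sInf_le ⟨T, V, hT, hV, rfl⟩

lemma cMinGe_le (hT : IsPMF T) (hV : IsCondPMF V) {R : ℝ} (hR : R ≤ DTQ T V Q) :
    cMinGe Q P R ≤ DQP T V Q P + DTQ T V Q - R :=
  sInf_le ⟨T, V, hT, hV, hR, rfl⟩

end Divergences

section Minima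

variable {𝓧 𝓨 : Type*} [Fintype 𝓧] [Fintype 𝓨] {P : 𝓧 → 𝓨 → ℝ} {Q : 𝓧 → ℝ}

lemma penMin_le_cMinGe {R ρ : ℝ} (hρ : ρ ≤ 1) : penMin Q P R ρ ≤ cMinGe Q P R :=
  le_sInf fun _ ⟨_, _, hT, hV, hR, hv⟩ =>
    hv ▸ (penMin_le hT hV R ρ).trans (EReal.add_coe_mul_sub_le_add_sub _ hρ hR)

-- A point mass at some `(x, y)` with `Q x P(y|x) > 0` makes both divergences finite.
lemma penMin_ne_top (hP : IsChannel P) (hQ : IsPMF Q) (R ρ : ℝ) : penMin Q P R ρ ≠ ⊤ := by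
  classical
  obtain ⟨x₀, hx₀⟩ := hQ.exists_ne_zero
  obtain ⟨y₀, hy₀⟩ := (hP x₀).exists_ne_zero
  set T : 𝓨 → ℝ := Pi.single y₀ 1
  set V : 𝓨 → 𝓧 → ℝ := fun _ => Pi.single x₀ 1
  have hV_supp : ∀ y x, V y x ≠ 0 → x = x₀ := fun y x h => by
    by_contra hx; exact h (Pi.single_eq_of_ne hx 1)
  have hT_supp : ∀ y, T y ≠ 0 → y = y₀ := fun y h => by
    by_contra hy; exact h (Pi.single_eq_of_ne hy 1)
  have hDQP : DQP T V Q P ≠ ⊤ := DQP_ne_top fun y x h => by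
    rw [hT_supp y (left_ne_zero_of_mul h), hV_supp y x (right_ne_zero_of_mul h)]
    exact mul_ne_zero hx₀ hy₀
  have hDTQ : DTQ T V Q ≠ ⊤ := DTQ_ne_top fun y x h => hV_supp y x h ▸ hx₀
  have hT : IsPMF T := isPMF_pi_single y₀
  have hV : IsCondPMF V := fun _ => isPMF_pi_single x₀
  refine ne_top_of_le_ne_top ?_ (penMin_le hT hV R ρ)
  lift DQP T V Q P to ℝ using ⟨hDQP, DQP_ne_bot T V Q P⟩ with a
  lift DTQ T V Q to ℝ using ⟨hDTQ, DTQ_ne_bot T V Q⟩ with d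
  exact_mod_cast EReal.coe_ne_top (a + ρ * (d - R))

end Minima

theorem stmt_1_general {𝓧 𝓨 : Type*} [Fintype 𝓧] [Fintype 𝓨]
    (P : 𝓧 → 𝓨 → ℝ) (hP : IsChannel P) (Q : 𝓧 → ℝ) (hQ : IsPMF Q)
    (R ρ : ℝ) (hρ : ρ ≤ 1) :
    penMin Q P R ρ ≤ cMinGe Q P R
    ∧ (cMinGe Q P R = penMin Q P R ρ →
        ∀ (T : 𝓨 → ℝ) (V : 𝓨 → 𝓧 → ℝ), IsPMF T → IsCondPMF V →
          (R : EReal) ≤ DTQ T V Q →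
          DQP T V Q P + DTQ T V Q - (R : EReal) = cMinGe Q P R →
          DQP T V Q P + (ρ : EReal) * (DTQ T V Q - (R : EReal)) = penMin Q P R ρ
          ∧ (ρ < 1 → DTQ T V Q = (R : EReal))
          ∧ (ρ = 1 → (R : EReal) ≤ DTQ T V Q))
    ∧ (∀ (T : 𝓨 → ℝ) (V : 𝓨 → 𝓧 → ℝ), IsPMF T → IsCondPMF V →
        DQP T V Q P + (ρ : EReal) * (DTQ T V Q - (R : EReal)) = penMin Q P R ρ →
        (ρ < 1 → DTQ T V Q = (R : EReal)) →
        (ρ = 1 → (R : EReal) ≤ DTQ T V Q) →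
        ((R : EReal) ≤ DTQ T V Q
          ∧ DQP T V Q P + DTQ T V Q - (R : EReal) = cMinGe Q P R)
        ∧ cMinGe Q P R = penMin Q P R ρ) := by
  have hle : penMin Q P R ρ ≤ cMinGe Q P R := penMin_le_cMinGe hρ
  refine ⟨hle, fun heq T V hT hV hR hmin => ?_, fun T V hT hV hpen hlt hone => ?_⟩
  · have hval : DQP T V Q P + DTQ T V Q - R = penMin Q P R ρ := hmin.trans heq
    have hpen : DQP T V Q P + ρ * (DTQ T V Q - R) = penMin Q P R ρ :=
      le_antisymm ((EReal.add_coe_mul_sub_le_add_sub _ hρ hR).trans_eq hval)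
        (penMin_le hT hV R ρ)
    refine ⟨hpen, fun hρ1 => ?_, fun _ => hR⟩
    exact EReal.eq_of_add_coe_mul_sub_eq_add_sub (DQP_ne_bot T V Q P) (DTQ_ne_bot T V Q) hρ1
      (hval ▸ penMin_ne_top hP hQ R ρ) (hpen.trans hval.symm)
  · have hR : (R : EReal) ≤ DTQ T V Q := hρ.lt_or_eq.elim (fun h => (hlt h).ge) hone
    have hval : DQP T V Q P + DTQ T V Q - R = penMin Q P R ρ :=
      (EReal.add_coe_mul_sub_eq_add_sub _ (hρ.lt_or_eq.imp hlt id)).symm.trans hpen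
    have heq : cMinGe Q P R = penMin Q P R ρ :=
      le_antisymm ((cMinGe_le hT hV hR).trans_eq hval) hle
    exact ⟨⟨hR, hval.trans heq.symm⟩, heq⟩

theorem stmt_1 {𝓧 𝓨 : Type*} [Fintype 𝓧] [Fintype 𝓨] [Nonempty 𝓧] [Nonempty 𝓨]
    (P : 𝓧 → 𝓨 → ℝ) (hP : IsChannel P) (Q : 𝓧 → ℝ) (hQ : IsPMF Q)
    (R ρ : ℝ) (hρ : ρ ≤ 1) :
    penMin Q P R ρ ≤ cMinGe Q P R
    ∧ (cMinGe Q P R = penMin Q P R ρ →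
        ∀ (T : 𝓨 → ℝ) (V : 𝓨 → 𝓧 → ℝ), IsPMF T → IsCondPMF V →
          (R : EReal) ≤ DTQ T V Q →
          DQP T V Q P + DTQ T V Q - (R : EReal) = cMinGe Q P R →
          DQP T V Q P + (ρ : EReal) * (DTQ T V Q - (R : EReal)) = penMin Q P R ρ
          ∧ (ρ < 1 → DTQ T V Q = (R : EReal))
          ∧ (ρ = 1 → (R : EReal) ≤ DTQ T V Q))
    ∧ (∀ (T : 𝓨 → ℝ) (V : 𝓨 → 𝓧 → ℝ), IsPMF T → IsCondPMF V →
        DQP T V Q P + (ρ : EReal) * (DTQ T V Q - (R : EReal)) = penMin Q P R ρ →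
        (ρ < 1 → DTQ T V Q = (R : EReal)) →
        (ρ = 1 → (R : EReal) ≤ DTQ T V Q) →
        ((R : EReal) ≤ DTQ T V Q
          ∧ DQP T V Q P + DTQ T V Q - (R : EReal) = cMinGe Q P R)
        ∧ cMinGe Q P R = penMin Q P R ρ) :=
  stmt_1_general P hP Q hQ R ρ hρ
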